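/- arXiv:1804.06560 — 2 statements merged into one kernel-verified Lean document; each statement's English description precedes it below -/
import Mathlib

section
/- For all t ∈ ℝ and all x, v ∈ ℝ³ one has the factorization t² − |x + v̂ t|² = ( t/(1+|v|²) − ω₊(x,v)/√(1+|v|²) ) · ( t − √(1+|v|²) ω₋(x,v) ). Moreover there is an absolute constant C > 0 such that for all x, v ∈ ℝ³: ω₋(x,v) ≤ −|x|/(C(1+|v|)) and 0 ≤ ω₊(x,v) ≤ C |x| (1+|v|). -/
noncomputable section

open MeasureTheory

abbrev E3 : Type := EuclideanSpace ℝ (Fin 3)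

/-- Euclidean dot product on `ℝ³`. -/
def dot (x y : E3) : ℝ := ∑ i, x i * y i

/-- Standard basis vectors of `ℝ³`. -/
def ee (i : Fin 3) : E3 := EuclideanSpace.single i 1

def mkE3 (f : Fin 3 → ℝ) : E3 := (WithLp.equiv 2 (Fin 3 → ℝ)).symm f

/-- Cross product on `ℝ³`. -/
def cross (a b : E3) : E3 :=
  mkE3 ![a 1 * b 2 - a 2 * b 1, a 2 * b 0 - a 0 * b 2, a 0 * b 1 - a 1 * b 0]

/-- Relativistic velocity `v̂ = v/√(1+|v|²)`. -/
def vhat (v : E3) : E3 := (Real.sqrt (1 + ‖v‖ ^ 2))⁻¹ • v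

/-- `ṽ = v/|v|`. -/
def tv (v : E3) : E3 := ‖v‖⁻¹ • v

/-- `Ṽᵢ = eᵢ × ṽ`. -/
def tV (i : Fin 3) (v : E3) : E3 := cross (ee i) (tv v)

/-- Bundled properties of the fixed cutoff function `ψ̃`. -/
structure Cutoff (ψ : ℝ → ℝ) : Prop where
  smooth : ContDiff ℝ (⊤ : ℕ∞) ψ
  even : ∀ r : ℝ, ψ (-r) = ψ r
  mem_Icc : ∀ r : ℝ, ψ r ∈ Set.Icc (0:ℝ) 1
  supp : ∀ r : ℝ, 3/2 < |r| → ψ r = 0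
  one : ∀ r : ℝ, |r| ≤ 5/4 → ψ r = 1

def psiK (ψ : ℝ → ℝ) (k : ℤ) (r : ℝ) : ℝ := ψ (r / 2 ^ k) - ψ (r / 2 ^ (k - 1))

def psiLe (ψ : ℝ → ℝ) (k : ℤ) (r : ℝ) : ℝ := ψ (r / 2 ^ k)

def psiGe (ψ : ℝ → ℝ) (k : ℤ) (r : ℝ) : ℝ := 1 - ψ (r / 2 ^ (k - 1))

def psiGe0 (ψ : ℝ → ℝ) (r : ℝ) : ℝ := 1 - ψ (2 * r)

def omegaP (x v : E3) : ℝ := dot x v + Real.sqrt ((dot x v) ^ 2 + ‖x‖ ^ 2)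

def omegaM (x v : E3) : ℝ := dot x v - Real.sqrt ((dot x v) ^ 2 + ‖x‖ ^ 2)

def omegaC (ψ : ℝ → ℝ) (x v : E3) : ℝ := psiGe0 ψ (‖x‖ ^ 2 + (dot x v) ^ 2) * omegaP x v

/-- The inhomogeneous modulation `d̃(t,x,v)`. -/
def dmod (ψ : ℝ → ℝ) (t : ℝ) (x v : E3) : ℝ :=
  t / (1 + ‖v‖ ^ 2) - omegaC ψ x v / Real.sqrt (1 + ‖v‖ ^ 2)

/-- Iterated directional derivatives along a list of directions. -/
def pds {V W : Type*} [NormedAddCommGroup V] [NormedSpace ℝ V]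
    [NormedAddCommGroup W] [NormedSpace ℝ W] (ws : List V) (f : V → W) : V → W :=
  ws.foldr (fun w g => fun p => fderiv ℝ g p w) f

/-- Fourier transform `f̂(ξ) = ∫ e^{-ix·ξ} f(x) dx`. -/
def FT (f : E3 → ℂ) (ξ : E3) : ℂ :=
  ∫ x : E3, Complex.exp (-(Complex.I * (dot x ξ : ℂ))) * f x

/-- Inverse Fourier transform. -/
def FTinv (g : E3 → ℂ) (x : E3) : ℂ :=
  (((2 * Real.pi) ^ 3 : ℝ))⁻¹ • ∫ ξ : E3, Complex.exp (Complex.I * (dot x ξ : ℂ)) * g ξ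

/-- Fourier transform in `x` of a function of `(x,v)`. -/
def FTx (f : E3 × E3 → ℂ) (ξ v : E3) : ℂ :=
  ∫ x : E3, Complex.exp (-(Complex.I * (dot x ξ : ℂ))) * f (x, v)

/-- `L²` norm. -/
def L2 {α W : Type*} [MeasureSpace α] [NormedAddCommGroup W] (f : α → W) : ℝ :=
  (∫ x, ‖f x‖ ^ 2) ^ ((1:ℝ)/2)

/-- The symbol norm `‖m‖_{S^∞_k}` (with multi-indices encoded as tuples of directions). -/
def Snorm (ψ : ℝ → ℝ) (m : E3 → ℂ) (k : ℤ) : ℝ :=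
  ∑ n ∈ Finset.range 11, ∑ α : Fin n → Fin 3,
    (2:ℝ) ^ ((n : ℤ) * k) *
      ∫ x : E3, ‖FTinv (fun ξ => pds ((List.ofFn α).map ee) m ξ * (psiK ψ k ‖ξ‖ : ℂ)) x‖

/-- The `X_n` norm of the paper (real-valued version). -/
def XnormR (ψ : ℝ → ℝ) (n : ℕ) (u : E3 → ℂ) : ℝ :=
  ⨆ k : ℤ, ⨆ ξ : E3,
    (2:ℝ) ^ (((n:ℤ)+1) * k) * ‖iteratedFDeriv ℝ n (FT u) ξ‖ * |psiK ψ k ‖ξ‖|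


lemma factor_aux (t a X V s S : ℝ) (hS : 0 < S) (hsN : S^2 = 1 + V^2)
    (hs : s^2 = a^2 + X^2) :
    t ^ 2 - (X ^ 2 + 2 * (t * (S⁻¹ * a)) + t ^ 2 * (S⁻¹ ^ 2 * V ^ 2)) =
      (t / (1 + V ^ 2) - (a + s) / S) * (t - S * (a - s)) := by
  have hS' : S ≠ 0 := hS.ne'
  have hV : V ^ 2 = S ^ 2 - 1 := by linarith
  rw [← hsN, hV]
  field_simp
  linear_combination S^2 * hs

lemma dot_eq_inner (x y : E3) : dot x y = inner ℝ x y := by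
  simp [dot, PiLp.inner_apply, RCLike.inner_apply, mul_comm]

lemma key_facts (x v : E3) :
    |dot x v| ≤ ‖x‖ * ‖v‖ ∧
    (Real.sqrt ((dot x v) ^ 2 + ‖x‖ ^ 2)) ^ 2 = (dot x v) ^ 2 + ‖x‖ ^ 2 ∧
    Real.sqrt ((dot x v) ^ 2 + ‖x‖ ^ 2) ≤ |dot x v| + ‖x‖ := by
  have h1 : |dot x v| ≤ ‖x‖ * ‖v‖ := by
    rw [dot_eq_inner]; exact abs_real_inner_le_norm x v
  have hnn : (0:ℝ) ≤ (dot x v) ^ 2 + ‖x‖ ^ 2 := by positivity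
  have h2 := Real.sq_sqrt hnn
  have h3 : Real.sqrt ((dot x v) ^ 2 + ‖x‖ ^ 2) ≤ |dot x v| + ‖x‖ := by
    rw [show |dot x v| + ‖x‖ = Real.sqrt ((|dot x v| + ‖x‖) ^ 2) from
      (Real.sqrt_sq (by positivity)).symm]
    apply Real.sqrt_le_sqrt
    have := abs_nonneg (dot x v)
    have := norm_nonneg x
    nlinarith [sq_abs (dot x v)]
  exact ⟨h1, h2, h3⟩

/-- Lemma 2.5 / `essentialidentity`: the factorization of
`t² − |x + v̂t|²` in terms of `ω₊, ω₋`, together with the rough bounds on `ω±`. -/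
theorem stmt_1 :
    (∀ (t : ℝ) (x v : E3),
      t ^ 2 - ‖x + t • vhat v‖ ^ 2 =
        (t / (1 + ‖v‖ ^ 2) - omegaP x v / Real.sqrt (1 + ‖v‖ ^ 2)) *
          (t - Real.sqrt (1 + ‖v‖ ^ 2) * omegaM x v)) ∧
    ∃ C : ℝ, 0 < C ∧ ∀ (x v : E3),
      omegaM x v ≤ -‖x‖ / (C * (1 + ‖v‖)) ∧
      0 ≤ omegaP x v ∧ omegaP x v ≤ C * ‖x‖ * (1 + ‖v‖) := by
  constructor
  · intro t x v
    have hN : (0:ℝ) < 1 + ‖v‖ ^ 2 := by positivity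
    have hsN : Real.sqrt (1 + ‖v‖ ^ 2) ^ 2 = 1 + ‖v‖ ^ 2 := Real.sq_sqrt hN.le
    have hsNpos : (0:ℝ) < Real.sqrt (1 + ‖v‖ ^ 2) := Real.sqrt_pos.mpr hN
    have hexp : ‖x + t • vhat v‖ ^ 2 =
        ‖x‖ ^ 2 + 2 * (t * ((Real.sqrt (1 + ‖v‖ ^ 2))⁻¹ * dot x v))
          + t ^ 2 * ((Real.sqrt (1 + ‖v‖ ^ 2))⁻¹ ^ 2 * ‖v‖ ^ 2) := by
      rw [@norm_add_sq_real]
      have h1 : inner ℝ x (t • vhat v) = t * ((Real.sqrt (1 + ‖v‖ ^ 2))⁻¹ * dot x v) := by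
        rw [real_inner_smul_right, vhat, real_inner_smul_right, ← dot_eq_inner]
      have h2 : ‖t • vhat v‖ ^ 2 = t ^ 2 * ((Real.sqrt (1 + ‖v‖ ^ 2))⁻¹ ^ 2 * ‖v‖ ^ 2) := by
        rw [vhat, norm_smul, norm_smul, Real.norm_eq_abs, Real.norm_eq_abs,
          abs_of_nonneg (inv_nonneg.mpr hsNpos.le), mul_pow, mul_pow, sq_abs]
      rw [h1, h2]
    have hnn : (0:ℝ) ≤ (dot x v) ^ 2 + ‖x‖ ^ 2 := by positivity
    have hs := Real.sq_sqrt hnn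
    rw [hexp, omegaP, omegaM]
    exact factor_aux t (dot x v) ‖x‖ ‖v‖ _ _ hsNpos hsN hs
  · refine ⟨2, by norm_num, fun x v => ?_⟩
    obtain ⟨h1, h2, h3⟩ := key_facts x v
    set a := dot x v
    set s := Real.sqrt (a ^ 2 + ‖x‖ ^ 2) with hsdef
    have hsnn : 0 ≤ s := Real.sqrt_nonneg _
    have habs : |a| ≤ s := by
      rw [hsdef, show |a| = Real.sqrt (|a| ^ 2) from (Real.sqrt_sq (abs_nonneg a)).symm]
      apply Real.sqrt_le_sqrt; rw [sq_abs]; nlinarith [sq_nonneg ‖x‖]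
    have hxnn : (0:ℝ) ≤ ‖x‖ := norm_nonneg x
    have hvnn : (0:ℝ) ≤ ‖v‖ := norm_nonneg v
    have hD : (0:ℝ) < 2 * (1 + ‖v‖) := by linarith
    have haleq : a ≤ s := le_trans (le_abs_self a) habs
    have hna : -a ≤ s := le_trans (neg_le_abs a) habs
    have hsum : s + a ≤ 2 * ‖x‖ * (1 + ‖v‖) := by nlinarith [abs_le.mp h1]
    refine ⟨?_, by simpa [omegaP] using by linarith, ?_⟩
    · rw [omegaM, neg_div, ← hsdef]
      have key : ‖x‖ ≤ (s - a) * (2 * (1 + ‖v‖)) := by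
        rcases eq_or_lt_of_le hxnn with h0 | h0
        · nlinarith
        · nlinarith [h2, mul_le_mul_of_nonneg_left hsum (by linarith : (0:ℝ) ≤ s - a)]
      have := (div_le_iff₀ hD).mpr key
      linarith
    · rw [omegaP, ← hsdef]; nlinarith [abs_le.mp h1]
end
end

section
/- Let T := ∂_t + v̂·∇ₓ be the free relativistic transport operator. For every C² function f : ℝ × ℝ³ × ℝ³ → ℝ (arguments (t,x,v)), all (t,x,v) with v ≠ 0, and i = 1,2,3: (i) T(Sf) − S(Tf) = Tf; (ii) T(Ω̃ᵢf) − Ω̃ᵢ(Tf) = 0; (iii) T(L̃ᵢf) − L̃ᵢ(Tf) = v̂_i · Tf; (iv) T(K̃_{v_i} f) − K̃_{v_i}(Tf) = 0, where v̂_i = v̂·e_i. -/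
noncomputable section

open MeasureTheory

/-- The free relativistic transport operator `T = ∂_t + v̂·∇ₓ` on functions of `(t,x,v)`. -/
def transD (f : ℝ × E3 × E3 → ℝ) : ℝ × E3 × E3 → ℝ :=
  fun p => fderiv ℝ f p (1, vhat p.2.2, 0)

/-- The scaling vector field `S = t∂_t + x·∇ₓ`. -/
def Sop (f : ℝ × E3 × E3 → ℝ) : ℝ × E3 × E3 → ℝ :=
  fun p => fderiv ℝ f p (p.1, p.2.1, 0)

/-- `Ω̃ᵢ = (eᵢ×v)·∇_v + (eᵢ×x)·∇ₓ`. -/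
def OmTil (i : Fin 3) (f : ℝ × E3 × E3 → ℝ) : ℝ × E3 × E3 → ℝ :=
  fun p => fderiv ℝ f p (0, cross (ee i) p.2.1, cross (ee i) p.2.2)

/-- `L̃ᵢ = t∂_{xᵢ} + xᵢ∂_t + √(1+|v|²)∂_{vᵢ}`. -/
def Ltil (i : Fin 3) (f : ℝ × E3 × E3 → ℝ) : ℝ × E3 × E3 → ℝ :=
  fun p => fderiv ℝ f p (p.2.1 i, p.1 • ee i, Real.sqrt (1 + ‖p.2.2‖ ^ 2) • ee i)

/-- `K̃_{vᵢ} = ∂_{vᵢ} + (t − √(1+|v|²) ω(x − v̂t, v)) ∂_{vᵢ}v̂ · ∇ₓ`. -/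
def Ktil (ψ : ℝ → ℝ) (i : Fin 3) (f : ℝ × E3 × E3 → ℝ) : ℝ × E3 × E3 → ℝ :=
  fun p => fderiv ℝ f p
    (0, (p.1 - Real.sqrt (1 + ‖p.2.2‖ ^ 2) * omegaC ψ (p.2.1 - p.1 • vhat p.2.2) p.2.2) •
          fderiv ℝ vhat p.2.2 (ee i), ee i)


open scoped RealInnerProductSpace

/-! ### Auxiliary lemmas -/

lemma mkE3_apply (f : Fin 3 → ℝ) (j : Fin 3) : mkE3 f j = f j := rfl

lemma inner_eq_dot (x y : E3) : ⟪x, y⟫ = dot x y := by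
  simp [dot, PiLp.inner_apply, RCLike.inner_apply, mul_comm]

lemma dot_ee (v : E3) (i : Fin 3) : dot v (ee i) = v i := by
  simp [dot, ee, EuclideanSpace.single_apply]

lemma dot_cross (v : E3) (i : Fin 3) : dot v (cross (ee i) v) = 0 := by
  fin_cases i <;>
    simp [dot, cross, ee, mkE3_apply, Fin.sum_univ_three, EuclideanSpace.single_apply] <;> ring

lemma cross_smul (a : E3) (c : ℝ) (b : E3) : cross a (c • b) = c • cross a b := by
  ext j
  fin_cases j <;> simp [cross, mkE3_apply, PiLp.smul_apply, smul_eq_mul] <;> ring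

lemma cross_zero (a : E3) : cross a 0 = 0 := by
  ext j; fin_cases j <;> simp [cross, mkE3_apply]

lemma one_add_normsq_pos (v : E3) : (0:ℝ) < 1 + ‖v‖ ^ 2 := by positivity

lemma sqs_pos (v : E3) : (0:ℝ) < Real.sqrt (1 + ‖v‖ ^ 2) :=
  Real.sqrt_pos.2 (one_add_normsq_pos v)

lemma sqs_sq (v : E3) : Real.sqrt (1 + ‖v‖ ^ 2) ^ 2 = 1 + ‖v‖ ^ 2 :=
  Real.sq_sqrt (one_add_normsq_pos v).le

lemma hasFDerivAt_s (v : E3) :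
    HasFDerivAt (fun v : E3 => 1 + ‖v‖ ^ 2)
      ((fderivInnerCLM ℝ (v, v)).comp
        ((ContinuousLinearMap.id ℝ E3).prod (ContinuousLinearMap.id ℝ E3))) v := by
  have h : HasFDerivAt (fun v : E3 => ⟪v, v⟫)
      ((fderivInnerCLM ℝ (v, v)).comp
        ((ContinuousLinearMap.id ℝ E3).prod (ContinuousLinearMap.id ℝ E3))) v :=
    (hasFDerivAt_id v).inner ℝ (hasFDerivAt_id v)
  have heq : (fun v : E3 => 1 + ‖v‖ ^ 2) = fun v : E3 => 1 + ⟪v, v⟫ := by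
    funext w; rw [real_inner_self_eq_norm_sq]
  rw [heq]
  have h2 := (hasFDerivAt_const (1:ℝ) v).add h
  rw [zero_add] at h2
  exact h2

lemma hasFDerivAt_s_apply (v w : E3) :
    ((fderivInnerCLM ℝ (v, v)).comp
      ((ContinuousLinearMap.id ℝ E3).prod (ContinuousLinearMap.id ℝ E3))) w
      = 2 * dot v w := by
  simp only [ContinuousLinearMap.comp_apply, ContinuousLinearMap.prod_apply,
    ContinuousLinearMap.id_apply, fderivInnerCLM_apply, inner_eq_dot]
  simp only [dot, Finset.mul_sum, ← Finset.sum_add_distrib]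
  congr 1; funext j; ring

/-- Derivative of `v ↦ √(1+‖v‖²)`. -/
def sqD (v : E3) : E3 →L[ℝ] ℝ :=
  (1 / (2 * Real.sqrt (1 + ‖v‖ ^ 2))) •
    ((fderivInnerCLM ℝ (v, v)).comp
      ((ContinuousLinearMap.id ℝ E3).prod (ContinuousLinearMap.id ℝ E3)))

lemma hasFDerivAt_sq (v : E3) :
    HasFDerivAt (fun v : E3 => Real.sqrt (1 + ‖v‖ ^ 2)) (sqD v) v :=
  (Real.hasDerivAt_sqrt (one_add_normsq_pos v).ne').comp_hasFDerivAt v (hasFDerivAt_s v)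

lemma differentiable_sq : Differentiable ℝ (fun v : E3 => Real.sqrt (1 + ‖v‖ ^ 2)) :=
  fun v => (hasFDerivAt_sq v).differentiableAt

/-- Derivative of `vhat`. -/
def vhatD (v : E3) : E3 →L[ℝ] E3 :=
  (Real.sqrt (1 + ‖v‖ ^ 2))⁻¹ • ContinuousLinearMap.id ℝ E3 +
  ((-(1 / (2 * Real.sqrt (1 + ‖v‖ ^ 2))) / Real.sqrt (1 + ‖v‖ ^ 2) ^ 2) •
      ((fderivInnerCLM ℝ (v, v)).comp
        ((ContinuousLinearMap.id ℝ E3).prod (ContinuousLinearMap.id ℝ E3)))).smulRight v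

lemma hasFDerivAt_vhat (v : E3) : HasFDerivAt vhat (vhatD v) v := by
  have h1 : HasDerivAt (fun r : ℝ => (Real.sqrt r)⁻¹)
      (-(1 / (2 * Real.sqrt (1 + ‖v‖ ^ 2))) / Real.sqrt (1 + ‖v‖ ^ 2) ^ 2) (1 + ‖v‖ ^ 2) :=
    (Real.hasDerivAt_sqrt (one_add_normsq_pos v).ne').inv (sqs_pos v).ne'
  have h2 := h1.comp_hasFDerivAt v (hasFDerivAt_s v)
  exact h2.smul (hasFDerivAt_id v)

lemma differentiable_vhat : Differentiable ℝ vhat :=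
  fun v => (hasFDerivAt_vhat v).differentiableAt

lemma fderiv_vhat_apply (v w : E3) :
    fderiv ℝ vhat v w = (Real.sqrt (1 + ‖v‖ ^ 2))⁻¹ • w
      - (((1 + ‖v‖ ^ 2) * Real.sqrt (1 + ‖v‖ ^ 2))⁻¹ * dot v w) • v := by
  rw [(hasFDerivAt_vhat v).fderiv]
  have hq := (sqs_pos v).ne'
  have hσ := (one_add_normsq_pos v).ne'
  simp only [vhatD, ContinuousLinearMap.add_apply, ContinuousLinearMap.smul_apply,
    ContinuousLinearMap.id_apply, ContinuousLinearMap.smulRight_apply, hasFDerivAt_s_apply,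
    smul_eq_mul]
  rw [sub_eq_add_neg, ← neg_smul, sqs_sq]
  rw [div_mul_eq_mul_div]
  rw [show -(1 / (2 * Real.sqrt (1 + ‖v‖ ^ 2))) * (2 * dot v w) / (1 + ‖v‖ ^ 2)
      = -(((1 + ‖v‖ ^ 2) * Real.sqrt (1 + ‖v‖ ^ 2))⁻¹ * dot v w) from by
    field_simp [hq, hσ]]

abbrev Pt : Type := ℝ × E3 × E3

/-- The commutator formula. -/
lemma comm_formula {f : Pt → ℝ} (hf : ContDiff ℝ 2 f) {A B : Pt → Pt} {p : Pt}
    (hA : DifferentiableAt ℝ A p) (hB : DifferentiableAt ℝ B p) :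
    fderiv ℝ (fun q => fderiv ℝ f q (A q)) p (B p)
      - fderiv ℝ (fun q => fderiv ℝ f q (B q)) p (A p)
      = fderiv ℝ f p (fderiv ℝ A p (B p)) - fderiv ℝ f p (fderiv ℝ B p (A p)) := by
  have hfd : DifferentiableAt ℝ (fderiv ℝ f) p := by
    have h1 : ContDiff ℝ 1 (fderiv ℝ f) := hf.fderiv_right (by norm_num)
    exact (h1.differentiable (by norm_num)) p
  have hsym := ContDiffAt.isSymmSndFDerivAt (hf.contDiffAt (x := p)) (by simp)
  rw [fderiv_clm_apply hfd hA, fderiv_clm_apply hfd hB]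
  simp only [ContinuousLinearMap.add_apply, ContinuousLinearMap.comp_apply,
    ContinuousLinearMap.flip_apply]
  rw [hsym (B p) (A p)]
  ring

def clmT : Pt →L[ℝ] ℝ := ContinuousLinearMap.fst ℝ ℝ (E3 × E3)
def clmX : Pt →L[ℝ] E3 :=
  (ContinuousLinearMap.fst ℝ E3 E3).comp (ContinuousLinearMap.snd ℝ ℝ (E3 × E3))
def clmV : Pt →L[ℝ] E3 :=
  (ContinuousLinearMap.snd ℝ E3 E3).comp (ContinuousLinearMap.snd ℝ ℝ (E3 × E3))

@[simp] lemma clmT_apply (w : Pt) : clmT w = w.1 := rfl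
@[simp] lemma clmX_apply (w : Pt) : clmX w = w.2.1 := rfl
@[simp] lemma clmV_apply (w : Pt) : clmV w = w.2.2 := rfl

/-- Facts about the transport direction field `B(p) = (1, v̂, 0)`. -/
lemma B_facts (t : ℝ) (x v : E3) :
    DifferentiableAt ℝ (fun q : Pt => ((1:ℝ), vhat q.2.2, (0:E3))) (t, x, v) ∧
    ∀ w : Pt, fderiv ℝ (fun q : Pt => ((1:ℝ), vhat q.2.2, (0:E3))) (t, x, v) w
      = (0, fderiv ℝ vhat v w.2.2, 0) := by
  have hv : HasFDerivAt (fun q : Pt => vhat q.2.2) ((fderiv ℝ vhat v).comp clmV) (t, x, v) :=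
    HasFDerivAt.comp (g := vhat) (t, x, v) (differentiable_vhat v).hasFDerivAt clmV.hasFDerivAt
  have h : HasFDerivAt (fun q : Pt => ((1:ℝ), vhat q.2.2, (0:E3)))
      ((0 : Pt →L[ℝ] ℝ).prod (((fderiv ℝ vhat v).comp clmV).prod (0 : Pt →L[ℝ] E3))) (t, x, v) :=
    (hasFDerivAt_const (1:ℝ) _).prodMk (hv.prodMk (hasFDerivAt_const (0:E3) _))
  refine ⟨h.differentiableAt, fun w => ?_⟩
  rw [h.fderiv]
  simp


lemma contDiff_dot2 : ContDiff ℝ (⊤ : ℕ∞) (fun q : E3 × E3 => dot q.1 q.2) := by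
  have heq : (fun q : E3 × E3 => dot q.1 q.2) = fun q : E3 × E3 => ⟪q.1, q.2⟫ := by
    funext q; rw [inner_eq_dot]
  rw [heq]; exact contDiff_fst.inner ℝ contDiff_snd

lemma diff_rfun : Differentiable ℝ (fun q : E3 × E3 => ‖q.1‖ ^ 2 + (dot q.1 q.2) ^ 2) := by
  have h1 : ContDiff ℝ (⊤ : ℕ∞) (fun q : E3 × E3 => ‖q.1‖ ^ 2 + (dot q.1 q.2) ^ 2) :=
    ((contDiff_norm_sq ℝ).comp contDiff_fst).add (contDiff_dot2.pow 2)
  exact h1.differentiable (by simp)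

lemma diff_omegaC (ψ : ℝ → ℝ) (hψ : Cutoff ψ) (q : E3 × E3) :
    DifferentiableAt ℝ (fun q : E3 × E3 => omegaC ψ q.1 q.2) q := by
  simp only [omegaC, psiGe0, omegaP]
  rcases lt_or_ge (‖q.1‖ ^ 2 + (dot q.1 q.2) ^ 2) (5/8) with h | h
  · have hopen : IsOpen {q' : E3 × E3 | ‖q'.1‖ ^ 2 + (dot q'.1 q'.2) ^ 2 < 5/8} :=
      isOpen_lt diff_rfun.continuous continuous_const
    have hev : (fun q' : E3 × E3 => (1 - ψ (2 * (‖q'.1‖ ^ 2 + dot q'.1 q'.2 ^ 2))) *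
        (dot q'.1 q'.2 + Real.sqrt (dot q'.1 q'.2 ^ 2 + ‖q'.1‖ ^ 2))) =ᶠ[nhds q]
        (fun _ => (0:ℝ)) := by
      filter_upwards [hopen.mem_nhds h] with q' hq'
      have hq'' : ‖q'.1‖ ^ 2 + (dot q'.1 q'.2) ^ 2 < 5/8 := hq'
      have h1 : ψ (2 * (‖q'.1‖ ^ 2 + dot q'.1 q'.2 ^ 2)) = 1 := by
        apply hψ.one
        rw [abs_of_nonneg (by positivity)]
        nlinarith
      rw [h1]; ring
    rw [hev.differentiableAt_iff]
    exact differentiableAt_const 0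
  · have hpos : (0:ℝ) < dot q.1 q.2 ^ 2 + ‖q.1‖ ^ 2 := by nlinarith
    have hdot : DifferentiableAt ℝ (fun q' : E3 × E3 => dot q'.1 q'.2) q :=
      (contDiff_dot2.differentiable (by simp)) q
    have hg : DifferentiableAt ℝ (fun q' : E3 × E3 => dot q'.1 q'.2 ^ 2 + ‖q'.1‖ ^ 2) q :=
      (hdot.pow 2).add ((((contDiff_norm_sq ℝ).comp contDiff_fst).differentiable one_ne_zero) q)
    have hsqrt : DifferentiableAt ℝ
        (fun q' : E3 × E3 => Real.sqrt (dot q'.1 q'.2 ^ 2 + ‖q'.1‖ ^ 2)) q :=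
      ((Real.hasDerivAt_sqrt hpos.ne').comp_hasFDerivAt q hg.hasFDerivAt).differentiableAt
    have hpsi : DifferentiableAt ℝ
        (fun q' : E3 × E3 => 1 - ψ (2 * (‖q'.1‖ ^ 2 + dot q'.1 q'.2 ^ 2))) q := by
      have hψd : Differentiable ℝ ψ := hψ.smooth.differentiable (by simp)
      exact (differentiableAt_const 1).sub
        (DifferentiableAt.comp q (hψd _) ((diff_rfun q).const_mul 2))
    exact hpsi.mul (hdot.add hsqrt)

lemma diff_fderiv_vhat_ee (i : Fin 3) :
    Differentiable ℝ (fun v : E3 => fderiv ℝ vhat v (ee i)) := by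
  have heq : (fun v : E3 => fderiv ℝ vhat v (ee i))
      = fun v : E3 => (Real.sqrt (1 + ‖v‖ ^ 2))⁻¹ • ee i
          - (((1 + ‖v‖ ^ 2) * Real.sqrt (1 + ‖v‖ ^ 2))⁻¹ * v i) • v := by
    funext v; rw [fderiv_vhat_apply, dot_ee]
  rw [heq]
  have hns : Differentiable ℝ (fun v : E3 => 1 + ‖v‖ ^ 2) :=
    (differentiable_const 1).add ((contDiff_norm_sq ℝ).differentiable one_ne_zero)
  have h1 : Differentiable ℝ (fun v : E3 => (Real.sqrt (1 + ‖v‖ ^ 2))⁻¹) :=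
    differentiable_sq.inv fun v => (sqs_pos v).ne'
  have h2 : Differentiable ℝ (fun v : E3 => ((1 + ‖v‖ ^ 2) * Real.sqrt (1 + ‖v‖ ^ 2))⁻¹) :=
    (hns.mul differentiable_sq).inv fun v => (mul_pos (one_add_normsq_pos v) (sqs_pos v)).ne'
  have h3 : Differentiable ℝ (fun v : E3 => v i) := (EuclideanSpace.proj (𝕜 := ℝ) i).differentiable
  exact (h1.smul_const (ee i)).sub ((h2.mul h3).smul differentiable_id)


lemma fderiv_vhat_cross (v : E3) (i : Fin 3) :
    fderiv ℝ vhat v (cross (ee i) v) = cross (ee i) (vhat v) := by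
  rw [fderiv_vhat_apply, dot_cross]
  simp [vhat, cross_smul]

lemma L_vec_id (v : E3) (i : Fin 3) :
    ((vhat v i : ℝ), ee i, (0:E3))
        - (((0:ℝ), Real.sqrt (1 + ‖v‖ ^ 2) • fderiv ℝ vhat v (ee i), (0:E3)) : Pt)
      = vhat v i • ((((1:ℝ), vhat v, (0:E3))) : Pt) := by
  have hq := (sqs_pos v).ne'
  have hσ := (one_add_normsq_pos v).ne'
  rw [fderiv_vhat_apply, dot_ee]
  refine Prod.ext ?_ (Prod.ext ?_ ?_)
  · simp [smul_eq_mul]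
  · show ee i - Real.sqrt (1 + ‖v‖ ^ 2) •
        ((Real.sqrt (1 + ‖v‖ ^ 2))⁻¹ • ee i
          - (((1 + ‖v‖ ^ 2) * Real.sqrt (1 + ‖v‖ ^ 2))⁻¹ * v i) • v)
      = vhat v i • vhat v
    ext j
    have haa : Real.sqrt (1 + ‖v‖ ^ 2) * Real.sqrt (1 + ‖v‖ ^ 2) = 1 + ‖v‖ ^ 2 :=
      Real.mul_self_sqrt (one_add_normsq_pos v).le
    simp only [vhat, PiLp.sub_apply, PiLp.smul_apply, smul_eq_mul]
    rw [← haa]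
    field_simp
    rw [Real.sqrt_sq (Real.sqrt_nonneg _)]
    ring
  · simp

def crossCLM (a : E3) : E3 →L[ℝ] E3 :=
  LinearMap.toContinuousLinearMap
    { toFun := fun b => cross a b
      map_add' := by
        intro b c; ext j
        fin_cases j <;> simp [cross, mkE3_apply, PiLp.add_apply] <;> ring
      map_smul' := by
        intro c b; ext j
        fin_cases j <;> simp [cross, mkE3_apply, PiLp.smul_apply, smul_eq_mul] <;> ring }

@[simp] lemma crossCLM_apply (a b : E3) : crossCLM a b = cross a b := rfl

/-- Facts about the `S` direction field. -/
lemma S_facts (t : ℝ) (x v : E3) :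
    DifferentiableAt ℝ (fun q : Pt => ((q.1 : ℝ), q.2.1, (0:E3))) (t, x, v) ∧
    fderiv ℝ (fun q : Pt => ((q.1 : ℝ), q.2.1, (0:E3))) (t, x, v) (((1:ℝ), vhat v, (0:E3)) : Pt)
      = ((1:ℝ), vhat v, (0:E3)) := by
  have h : HasFDerivAt (fun q : Pt => ((q.1 : ℝ), q.2.1, (0:E3)))
      (clmT.prod (clmX.prod 0)) (t, x, v) :=
    clmT.hasFDerivAt.prodMk (clmX.hasFDerivAt.prodMk (hasFDerivAt_const (0:E3) _))
  refine ⟨h.differentiableAt, ?_⟩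
  rw [h.fderiv]
  simp

/-- Facts about the `Ω̃ᵢ` direction field. -/
lemma Om_facts (t : ℝ) (x v : E3) (i : Fin 3) :
    DifferentiableAt ℝ (fun q : Pt => ((0:ℝ), cross (ee i) q.2.1, cross (ee i) q.2.2)) (t, x, v) ∧
    fderiv ℝ (fun q : Pt => ((0:ℝ), cross (ee i) q.2.1, cross (ee i) q.2.2)) (t, x, v)
        (((1:ℝ), vhat v, (0:E3)) : Pt)
      = ((0:ℝ), cross (ee i) (vhat v), (0:E3)) := by
  have h : HasFDerivAt (fun q : Pt => ((0:ℝ), cross (ee i) q.2.1, cross (ee i) q.2.2))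
      ((0 : Pt →L[ℝ] ℝ).prod (((crossCLM (ee i)).comp clmX).prod ((crossCLM (ee i)).comp clmV)))
      (t, x, v) :=
    (hasFDerivAt_const (0:ℝ) _).prodMk (((crossCLM (ee i)).comp clmX).hasFDerivAt.prodMk
      ((crossCLM (ee i)).comp clmV).hasFDerivAt)
  refine ⟨h.differentiableAt, ?_⟩
  rw [h.fderiv]
  simp [cross_zero]

/-- Facts about the `L̃ᵢ` direction field. -/
lemma L_facts (t : ℝ) (x v : E3) (i : Fin 3) :
    DifferentiableAt ℝ
      (fun q : Pt => ((q.2.1 i : ℝ), q.1 • ee i, Real.sqrt (1 + ‖q.2.2‖ ^ 2) • ee i)) (t, x, v) ∧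
    fderiv ℝ (fun q : Pt => ((q.2.1 i : ℝ), q.1 • ee i, Real.sqrt (1 + ‖q.2.2‖ ^ 2) • ee i))
        (t, x, v) (((1:ℝ), vhat v, (0:E3)) : Pt)
      = ((vhat v i : ℝ), ee i, (0:E3)) := by
  have h3 : HasFDerivAt (fun q : Pt => Real.sqrt (1 + ‖q.2.2‖ ^ 2) • ee i)
      (((sqD v).comp clmV).smulRight (ee i)) (t, x, v) :=
    (((hasFDerivAt_sq v).comp (t, x, v) clmV.hasFDerivAt)).smul_const (ee i)
  have h : HasFDerivAt
      (fun q : Pt => ((q.2.1 i : ℝ), q.1 • ee i, Real.sqrt (1 + ‖q.2.2‖ ^ 2) • ee i))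
      (((EuclideanSpace.proj i).comp clmX).prod ((clmT.smulRight (ee i)).prod
        ((((sqD v).comp clmV)).smulRight (ee i)))) (t, x, v) :=
    ((EuclideanSpace.proj i).comp clmX).hasFDerivAt.prodMk
      ((clmT.smulRight (ee i)).hasFDerivAt.prodMk h3)
  refine ⟨h.differentiableAt, ?_⟩
  rw [h.fderiv]
  simp


/-- Facts about the `K̃ᵢ` direction field. -/
lemma K_facts (ψ : ℝ → ℝ) (hψ : Cutoff ψ) (i : Fin 3) (t : ℝ) (x v : E3) :
    DifferentiableAt ℝ (fun q : Pt => ((0:ℝ),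
        (q.1 - Real.sqrt (1 + ‖q.2.2‖ ^ 2) * omegaC ψ (q.2.1 - q.1 • vhat q.2.2) q.2.2) •
          fderiv ℝ vhat q.2.2 (ee i), ee i)) (t, x, v) ∧
    fderiv ℝ (fun q : Pt => ((0:ℝ),
        (q.1 - Real.sqrt (1 + ‖q.2.2‖ ^ 2) * omegaC ψ (q.2.1 - q.1 • vhat q.2.2) q.2.2) •
          fderiv ℝ vhat q.2.2 (ee i), ee i)) (t, x, v) (((1:ℝ), vhat v, (0:E3)) : Pt)
      = ((0:ℝ), fderiv ℝ vhat v (ee i), (0:E3)) := by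
  have hvφ : HasFDerivAt (fun q : Pt => vhat q.2.2) ((fderiv ℝ vhat v).comp clmV) (t, x, v) :=
    HasFDerivAt.comp (g := vhat) (t, x, v) (differentiable_vhat v).hasFDerivAt clmV.hasFDerivAt
  have hm1 := clmT.hasFDerivAt.smul hvφ
  have hm2 := clmX.hasFDerivAt.sub hm1
  have hm := hm2.prodMk clmV.hasFDerivAt
  have hF := (diff_omegaC ψ hψ ((x - t • vhat v, v) : E3 × E3)).hasFDerivAt
  have hW := hF.comp ((t, x, v) : Pt) hm
  have hsqv := (hasFDerivAt_sq v).comp ((t, x, v) : Pt) clmV.hasFDerivAt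
  have hc := clmT.hasFDerivAt.sub (hsqv.mul hW)
  have hG := ((diff_fderiv_vhat_ee i v).hasFDerivAt).comp ((t, x, v) : Pt) clmV.hasFDerivAt
  have hA2 := hc.smul hG
  have h : HasFDerivAt (fun q : Pt => ((0:ℝ),
        (q.1 - Real.sqrt (1 + ‖q.2.2‖ ^ 2) * omegaC ψ (q.2.1 - q.1 • vhat q.2.2) q.2.2) •
          fderiv ℝ vhat q.2.2 (ee i), ee i))
      ((0 : Pt →L[ℝ] ℝ).prod ((
        (t - Real.sqrt (1 + ‖v‖ ^ 2) * omegaC ψ (x - t • vhat v) v) •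
            ((fderiv ℝ (fun u : E3 => fderiv ℝ vhat u (ee i)) v).comp clmV) +
          (clmT - (Real.sqrt (1 + ‖v‖ ^ 2) •
              ((fderiv ℝ (fun q : E3 × E3 => omegaC ψ q.1 q.2) ((x - t • vhat v, v) : E3 × E3)).comp
                ((clmX - (t • ((fderiv ℝ vhat v).comp clmV) + clmT.smulRight (vhat v))).prod clmV)) +
            omegaC ψ (x - t • vhat v) v • ((sqD v).comp clmV))).smulRight
              (fderiv ℝ vhat v (ee i))).prod
        (0 : Pt →L[ℝ] E3))) (t, x, v) :=
    (hasFDerivAt_const (0:ℝ) _).prodMk (hA2.prodMk (hasFDerivAt_const (ee i) _))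
  refine ⟨h.differentiableAt, ?_⟩
  rw [h.fderiv]
  simp [Prod.mk_zero_zero]

/-- commutation of the vector fields `S, Ω̃ᵢ, L̃ᵢ, K̃_{vᵢ}` with the free
relativistic transport operator `T = ∂_t + v̂·∇ₓ`. -/
theorem stmt_4 (ψ : ℝ → ℝ) (hψ : Cutoff ψ)
    (f : ℝ × E3 × E3 → ℝ) (hf : ContDiff ℝ 2 f) :
    ∀ (t : ℝ) (x v : E3), v ≠ 0 → ∀ i : Fin 3,
      (transD (Sop f) (t, x, v) - Sop (transD f) (t, x, v) = transD f (t, x, v)) ∧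
      (transD (OmTil i f) (t, x, v) - OmTil i (transD f) (t, x, v) = 0) ∧
      (transD (Ltil i f) (t, x, v) - Ltil i (transD f) (t, x, v)
        = vhat v i * transD f (t, x, v)) ∧
      (transD (Ktil ψ i f) (t, x, v) - Ktil ψ i (transD f) (t, x, v) = 0) := by
  intro t x v hv i
  obtain ⟨hBdiff, hBap⟩ := B_facts t x v
  refine ⟨?_, ?_, ?_, ?_⟩
  · -- S commutator
    obtain ⟨hAdiff, hAap⟩ := S_facts t x v
    have key := comm_formula hf hAdiff hBdiff
    have key2 : transD (Sop f) (t, x, v) - Sop (transD f) (t, x, v)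
        = fderiv ℝ f (t, x, v)
            (fderiv ℝ (fun q : Pt => ((q.1 : ℝ), q.2.1, (0:E3))) (t, x, v)
              (((1:ℝ), vhat v, (0:E3)) : Pt))
          - fderiv ℝ f (t, x, v)
            (fderiv ℝ (fun q : Pt => ((1:ℝ), vhat q.2.2, (0:E3))) (t, x, v)
              (((t:ℝ), x, (0:E3)) : Pt)) := key
    rw [key2, hAap, hBap]
    simp [transD, Prod.mk_zero_zero]
  · -- Ω commutator
    obtain ⟨hAdiff, hAap⟩ := Om_facts t x v i
    have key := comm_formula hf hAdiff hBdiff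
    have key2 : transD (OmTil i f) (t, x, v) - OmTil i (transD f) (t, x, v)
        = fderiv ℝ f (t, x, v)
            (fderiv ℝ (fun q : Pt => ((0:ℝ), cross (ee i) q.2.1, cross (ee i) q.2.2)) (t, x, v)
              (((1:ℝ), vhat v, (0:E3)) : Pt))
          - fderiv ℝ f (t, x, v)
            (fderiv ℝ (fun q : Pt => ((1:ℝ), vhat q.2.2, (0:E3))) (t, x, v)
              (((0:ℝ), cross (ee i) x, cross (ee i) v) : Pt)) := key
    rw [key2, hAap, hBap]
    simp [fderiv_vhat_cross]
  · -- L commutator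
    obtain ⟨hAdiff, hAap⟩ := L_facts t x v i
    have key := comm_formula hf hAdiff hBdiff
    have key2 : transD (Ltil i f) (t, x, v) - Ltil i (transD f) (t, x, v)
        = fderiv ℝ f (t, x, v)
            (fderiv ℝ (fun q : Pt =>
                ((q.2.1 i : ℝ), q.1 • ee i, Real.sqrt (1 + ‖q.2.2‖ ^ 2) • ee i)) (t, x, v)
              (((1:ℝ), vhat v, (0:E3)) : Pt))
          - fderiv ℝ f (t, x, v)
            (fderiv ℝ (fun q : Pt => ((1:ℝ), vhat q.2.2, (0:E3))) (t, x, v)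
              (((x i : ℝ), t • ee i, Real.sqrt (1 + ‖v‖ ^ 2) • ee i) : Pt)) := key
    rw [key2, hAap, hBap]
    dsimp only
    rw [_root_.map_smul, ← (fderiv ℝ f (t, x, v)).map_sub, L_vec_id v i, _root_.map_smul]
    simp [transD]
  · -- K commutator
    obtain ⟨hAdiff, hAap⟩ := K_facts ψ hψ i t x v
    have key := comm_formula hf hAdiff hBdiff
    have key2 : transD (Ktil ψ i f) (t, x, v) - Ktil ψ i (transD f) (t, x, v)
        = fderiv ℝ f (t, x, v)
            (fderiv ℝ (fun q : Pt => ((0:ℝ),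
                (q.1 - Real.sqrt (1 + ‖q.2.2‖ ^ 2) *
                    omegaC ψ (q.2.1 - q.1 • vhat q.2.2) q.2.2) •
                  fderiv ℝ vhat q.2.2 (ee i), ee i)) (t, x, v)
              (((1:ℝ), vhat v, (0:E3)) : Pt))
          - fderiv ℝ f (t, x, v)
            (fderiv ℝ (fun q : Pt => ((1:ℝ), vhat q.2.2, (0:E3))) (t, x, v)
              (((0:ℝ),
                (t - Real.sqrt (1 + ‖v‖ ^ 2) * omegaC ψ (x - t • vhat v) v) •
                  fderiv ℝ vhat v (ee i), ee i) : Pt)) := key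
    rw [key2, hAap, hBap]
    simp
end
end
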